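/- Let q be a nonnegative, transient, substochastic n×n matrix with reward vector r ∈ ℝ^n, so that Hypothesis RN holds with amplifications a(j) = Σ_p q(j,p), and let M be a nonempty subset of the index set. Suppose i ∈ M is weakly preferable to every other state in M (with respect to the data q, r). Let (q̄, r̄) be obtained from (q, r) by the pivot at i, with updated amplifications ā(j) = Σ_p q̄(j,p) and updated ratios ρ̄ computed from (q̄, r̄). Then ρ̄(i) = ρ(i), and for every j ∈ M \ {i} one has ρ(i) ≥ ρ̄(j) ≥ ρ(j) in the extended reals. -/

import Mathlib

/-! Write `d = 1 - a ≥ 0` for the deficiency of a state. Then `ρ(j)` is the extended quotient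
`r(j) / d(j)`, and cross-multiplying shows that weak preference of `i` over `j` means exactly
`ρ(j) ≤ ρ(i)`. Pivoting at `i` divides `(r(i), d(i))` by `1 - q(i,i)`, which is positive by
transience, so `ρ(i)` is unchanged; for `j ≠ i` it replaces `(r(j), d(j))` by
`(r(j), d(j)) + t • (r(i), d(i))` with `t = q(j,i) / (1 - q(i,i)) ≥ 0`, a mediant, whose
quotient lies between `ρ(j)` and `ρ(i)`. -/

open Matrix Filter

open scoped Classical

/-- The matrix produced by the pivot at index `i`. -/
noncomputable def pivotQ {n : ℕ} (q : Matrix (Fin n) (Fin n) ℝ) (i : Fin n) :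
    Matrix (Fin n) (Fin n) ℝ := fun j p =>
  if p = i then 0
  else if j = i then q i p / (1 - q i i)
  else q j p + q j i * (q i p / (1 - q i i))

/-- The reward vector produced by the pivot at index `i`. -/
noncomputable def pivotR {n : ℕ} (q : Matrix (Fin n) (Fin n) ℝ) (r : Fin n → ℝ)
    (i : Fin n) : Fin n → ℝ := fun j =>
  if j = i then r i / (1 - q i i) else r j + q j i * (r i / (1 - q i i))

/-- Amplification of state `j`: the `j`-th row sum of `q`. -/
noncomputable def ampl {n : ℕ} (q : Matrix (Fin n) (Fin n) ℝ) (j : Fin n) : ℝ :=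
  ∑ p, q j p

/-- Category of state `j` under Hypothesis RN. -/
noncomputable def catOf {n : ℕ} (q : Matrix (Fin n) (Fin n) ℝ) (r : Fin n → ℝ)
    (j : Fin n) : ℕ :=
  if ampl q j < 1 then 2 else if 0 ≤ r j then 1 else 3

/-- Ratio of state `j` under Hypothesis RN, in the extended reals. -/
noncomputable def rhoOf {n : ℕ} (q : Matrix (Fin n) (Fin n) ℝ) (r : Fin n → ℝ)
    (j : Fin n) : EReal :=
  if ampl q j < 1 then ((r j / (1 - ampl q j) : ℝ) : EReal)
  else if 0 ≤ r j then ⊤ else ⊥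

/-- `i` is weakly preferable to `j` with respect to data `(q, r)`. -/
noncomputable def WeaklyPref {n : ℕ} (q : Matrix (Fin n) (Fin n) ℝ) (r : Fin n → ℝ)
    (i j : Fin n) : Prop :=
  r i + ampl q i * r j > r j + ampl q j * r i ∨
    (r i + ampl q i * r j = r j + ampl q j * r i ∧ catOf q r i ≤ catOf q r j)

lemma Matrix.pow_diag_le_pow_apply {ι : Type*} [Fintype ι] [DecidableEq ι]
    {q : Matrix ι ι ℝ} (hq : ∀ j p, 0 ≤ q j p) (i : ι) (t : ℕ) :
    q i i ^ t ≤ (q ^ t) i i := by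
  induction t with
  | zero => simp
  | succ t ih =>
    rw [pow_succ, pow_succ, Matrix.mul_apply]
    calc q i i ^ t * q i i ≤ (q ^ t) i i * q i i := by gcongr; exact hq i i
      _ ≤ ∑ p, (q ^ t) i p * q p i :=
        Finset.single_le_sum (f := fun p => (q ^ t) i p * q p i)
          (fun p _ => mul_nonneg (Matrix.pow_apply_nonneg hq t i p) (hq p i)) (Finset.mem_univ i)

lemma Matrix.diag_lt_one_of_tendsto_pow_zero {ι : Type*} [Fintype ι] [DecidableEq ι]
    {q : Matrix ι ι ℝ} (hq : ∀ j p, 0 ≤ q j p)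
    (htr : ∀ j p, Tendsto (fun t : ℕ => (q ^ t) j p) atTop (nhds 0)) (i : ι) :
    q i i < 1 := by
  by_contra! h
  have hge : ∀ t : ℕ, 1 ≤ (q ^ t) i i := fun t =>
    (one_le_pow₀ h).trans (Matrix.pow_diag_le_pow_apply hq i t)
  have := ge_of_tendsto' (htr i i) hge
  norm_num at this

-- `ρ` and the category of a state, as functions of its reward `x` and deficiency `d = 1 - a`.
noncomputable def ratio (x d : ℝ) : EReal :=
  if 0 < d then ((x / d : ℝ) : EReal) else if 0 ≤ x then ⊤ else ⊥

noncomputable def category (x d : ℝ) : ℕ :=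
  if 0 < d then 2 else if 0 ≤ x then 1 else 3

section ratio

variable {x y d e : ℝ}

lemma ratio_of_pos (hd : 0 < d) : ratio x d = ((x / d : ℝ) : EReal) := if_pos hd

lemma ratio_zero_of_nonneg (hx : 0 ≤ x) : ratio x 0 = ⊤ := by simp [ratio, hx]

lemma ratio_zero_of_neg (hx : x < 0) : ratio x 0 = ⊥ := by simp [ratio, hx]

lemma ratio_mul_mul {t : ℝ} (ht : 0 < t) (x d : ℝ) : ratio (t * x) (t * d) = ratio x d := by
  simp only [ratio, mul_pos_iff_of_pos_left ht, mul_nonneg_iff_of_pos_left ht,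
    mul_div_mul_left _ _ ht.ne']

lemma ratio_div_div {s : ℝ} (hs : 0 < s) (x d : ℝ) : ratio (x / s) (d / s) = ratio x d := by
  simpa only [div_eq_inv_mul] using ratio_mul_mul (inv_pos.mpr hs) x d

lemma ratio_le_ratio_of_cross_mul (hd : 0 ≤ d) (he : 0 ≤ e)
    (h : x * e < y * d ∨ (x * e = y * d ∧ category y e ≤ category x d)) :
    ratio x d ≤ ratio y e := by
  rcases hd.eq_or_lt with rfl | hd <;> rcases he.eq_or_lt with rfl | he
  · rcases le_or_gt 0 y with hy | hy
    · exact (ratio_zero_of_nonneg hy).symm ▸ le_top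
    · have hx : x < 0 := by
        by_contra! hx
        simp [category, hx, hy.not_ge] at h
      exact (ratio_zero_of_neg hx).symm ▸ bot_le
  · have hx : x < 0 := by
      by_contra! hx
      rcases h with h | ⟨-, h⟩
      · nlinarith
      · simp [category, hx, he] at h
    exact (ratio_zero_of_neg hx).symm ▸ bot_le
  · have hy : 0 ≤ y := by
      rcases h with h | ⟨h, -⟩ <;> nlinarith
    exact (ratio_zero_of_nonneg hy).symm ▸ le_top
  · rw [ratio_of_pos hd, ratio_of_pos he, EReal.coe_le_coe_iff, div_le_div_iff₀ hd he]
    rcases h with h | h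
    · exact h.le
    · exact h.1.le

lemma ratio_le_ratio_add_add (hd : 0 ≤ d) (he : 0 ≤ e) (h : ratio x d ≤ ratio y e) :
    ratio x d ≤ ratio (x + y) (d + e) ∧ ratio (x + y) (d + e) ≤ ratio y e := by
  rcases hd.eq_or_lt with rfl | hd <;> rcases he.eq_or_lt with rfl | he
  · rw [add_zero]
    rcases le_or_gt 0 x with hx | hx
    · have hy : 0 ≤ y := by
        by_contra! hy
        simp [ratio_zero_of_nonneg hx, ratio_zero_of_neg hy] at h
      simp [ratio_zero_of_nonneg hx, ratio_zero_of_nonneg hy,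
        ratio_zero_of_nonneg (add_nonneg hx hy)]
    · refine ⟨(ratio_zero_of_neg hx).symm ▸ bot_le, ?_⟩
      rcases le_or_gt 0 y with hy | hy
      · exact (ratio_zero_of_nonneg hy).symm ▸ le_top
      · exact (ratio_zero_of_neg (add_neg hx hy)).symm ▸ bot_le
  · have hx : x < 0 := by
      by_contra! hx
      simp [ratio_zero_of_nonneg hx, ratio_of_pos he] at h
    simp only [zero_add, ratio_zero_of_neg hx, ratio_of_pos he, EReal.coe_le_coe_iff]
    exact ⟨bot_le, div_le_div_of_nonneg_right (by linarith) he.le⟩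
  · have hy : 0 ≤ y := by
      by_contra! hy
      simp [ratio_zero_of_neg hy, ratio_of_pos hd] at h
    simp only [add_zero, ratio_zero_of_nonneg hy, ratio_of_pos hd, EReal.coe_le_coe_iff]
    exact ⟨div_le_div_of_nonneg_right (by linarith) hd.le, le_top⟩
  · have hde : 0 < d + e := add_pos hd he
    rw [ratio_of_pos hd, ratio_of_pos he, EReal.coe_le_coe_iff, div_le_div_iff₀ hd he] at h
    simp only [ratio_of_pos hd, ratio_of_pos he, ratio_of_pos hde, EReal.coe_le_coe_iff,
      div_le_div_iff₀ hd hde, div_le_div_iff₀ hde he]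
    constructor <;> linarith

lemma ratio_le_ratio_add_mul {t : ℝ} (hd : 0 ≤ d) (he : 0 ≤ e) (ht : 0 ≤ t)
    (h : ratio x d ≤ ratio y e) :
    ratio x d ≤ ratio (x + t * y) (d + t * e) ∧ ratio (x + t * y) (d + t * e) ≤ ratio y e := by
  rcases ht.eq_or_lt with rfl | ht
  · simpa using h
  · rw [← ratio_mul_mul ht y e] at h ⊢
    exact ratio_le_ratio_add_add hd (mul_nonneg ht.le he) h

end ratio

section pivot

variable {n : ℕ} (q : Matrix (Fin n) (Fin n) ℝ) (r : Fin n → ℝ) {i j : Fin n}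

lemma rhoOf_eq_ratio (j : Fin n) : rhoOf q r j = ratio (r j) (1 - ampl q j) := by
  simp only [rhoOf, ratio, sub_pos]

lemma catOf_eq_category (j : Fin n) : catOf q r j = category (r j) (1 - ampl q j) := by
  simp only [catOf, category, sub_pos]

private lemma sum_ite_eq_zero (f : Fin n → ℝ) :
    (∑ p, if p = i then (0 : ℝ) else f p) = ∑ p, f p - f i := by
  simp [Finset.sum_ite, Finset.filter_ne', Finset.sum_erase_eq_sub]

lemma one_sub_ampl_pivotQ_self (hs : 1 - q i i ≠ 0) :
    1 - ampl (pivotQ q i) i = (1 - ampl q i) / (1 - q i i) := by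
  simp only [ampl, pivotQ, if_true, sum_ite_eq_zero, ← Finset.sum_div]
  field_simp
  ring

lemma one_sub_ampl_pivotQ_of_ne (hji : j ≠ i) (hs : 1 - q i i ≠ 0) :
    1 - ampl (pivotQ q i) j = (1 - ampl q j) + q j i / (1 - q i i) * (1 - ampl q i) := by
  simp only [ampl, pivotQ, if_neg hji, sum_ite_eq_zero, Finset.sum_add_distrib,
    ← Finset.mul_sum, ← Finset.sum_div]
  field_simp
  ring

lemma pivotR_self : pivotR q r i i = r i / (1 - q i i) := if_pos rfl

lemma pivotR_of_ne (hji : j ≠ i) : pivotR q r i j = r j + q j i / (1 - q i i) * r i := by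
  simp only [pivotR, if_neg hji]
  ring

end pivot

lemma WeaklyPref.rhoOf_le {n : ℕ} {q : Matrix (Fin n) (Fin n) ℝ} {r : Fin n → ℝ} {i j : Fin n}
    (hsub : ∀ j, ∑ p, q j p ≤ 1) (h : WeaklyPref q r i j) : rhoOf q r j ≤ rhoOf q r i := by
  rw [rhoOf_eq_ratio, rhoOf_eq_ratio]
  refine ratio_le_ratio_of_cross_mul (sub_nonneg.mpr (hsub j)) (sub_nonneg.mpr (hsub i)) ?_
  rw [WeaklyPref, catOf_eq_category, catOf_eq_category] at h
  rcases h with h | ⟨h, hcat⟩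
  · left; linarith
  · right; exact ⟨by linarith, hcat⟩

theorem pivot_ratio_monotone_general {n : ℕ} (q : Matrix (Fin n) (Fin n) ℝ) (r : Fin n → ℝ)
    (hnn : ∀ j p, 0 ≤ q j p) (hsub : ∀ j, ∑ p, q j p ≤ 1)
    (htr : ∀ j p, Tendsto (fun t : ℕ => (q ^ t) j p) atTop (nhds 0))
    (M : Finset (Fin n)) (i : Fin n)
    (hpref : ∀ j ∈ M, j ≠ i → WeaklyPref q r i j) :
    rhoOf (pivotQ q i) (pivotR q r i) i = rhoOf q r i ∧
      ∀ j ∈ M, j ≠ i →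
        rhoOf q r j ≤ rhoOf (pivotQ q i) (pivotR q r i) j ∧
        rhoOf (pivotQ q i) (pivotR q r i) j ≤ rhoOf q r i := by
  have hs : 0 < 1 - q i i := sub_pos.mpr (Matrix.diag_lt_one_of_tendsto_pow_zero hnn htr i)
  refine ⟨?_, fun j hjM hji => ?_⟩
  · simp only [rhoOf_eq_ratio]
    rw [one_sub_ampl_pivotQ_self q hs.ne', pivotR_self, ratio_div_div hs]
  · have hρ := (hpref j hjM hji).rhoOf_le hsub
    simp only [rhoOf_eq_ratio] at hρ ⊢
    rw [one_sub_ampl_pivotQ_of_ne q hji hs.ne', pivotR_of_ne q r hji]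
    exact ratio_le_ratio_add_mul (sub_nonneg.mpr (hsub j)) (sub_nonneg.mpr (hsub i))
      (div_nonneg (hnn j i) hs.le) hρ

/-- if `q` is nonnegative, substochastic and transient, `M` is a nonempty set of
states, and `i ∈ M` is weakly preferable to every other state of `M`, then pivoting at `i`
preserves the ratio of `i` and, for every other `j ∈ M`, can only improve the ratio of `j`,
but not above that of `i`: `ρ̄(i) = ρ(i)` and `ρ(i) ≥ ρ̄(j) ≥ ρ(j)`. -/
theorem pivot_ratio_monotone {n : ℕ} (q : Matrix (Fin n) (Fin n) ℝ) (r : Fin n → ℝ)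
    (hnn : ∀ j p, 0 ≤ q j p) (hsub : ∀ j, ∑ p, q j p ≤ 1)
    (htr : ∀ j p, Tendsto (fun t : ℕ => (q ^ t) j p) atTop (nhds 0))
    (M : Finset (Fin n)) (i : Fin n) (hiM : i ∈ M)
    (hpref : ∀ j ∈ M, j ≠ i → WeaklyPref q r i j) :
    rhoOf (pivotQ q i) (pivotR q r i) i = rhoOf q r i ∧
      ∀ j ∈ M, j ≠ i →
        rhoOf q r j ≤ rhoOf (pivotQ q i) (pivotR q r i) j ∧
        rhoOf (pivotQ q i) (pivotR q r i) j ≤ rhoOf q r i :=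
  pivot_ratio_monotone_general q r hnn hsub htr M i hpref
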